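/- For all terms t and u of the binding-logic language L and every variable x, the pre-cooking of the capture-avoiding substitution equals, modulo the congruence generated by σ, the grafting of the pre-cooked term: ((t/x)u)' ≡ ⟨t'/x⟩u'. -/
import Mathlib

/- ## Binding logic: syntax and sequent calculus -/

/-- A binding-logic language: function and predicate symbols with binding arities. -/
structure BSig where
  Fn : Type
  Pr : Type
  /-- binding arity of a function symbol -/
  far : Fn → List ℕ
  /-- binding arity of a predicate symbol -/
  par : Pr → List ℕ

/-- Terms of binding logic (α-equivalence classes, in locally nameless / de Bruijn style):
`bvar i` is a variable bound by a binder of a function symbol or by a quantifier,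
`fvar x` is a named free variable.  In `app f a`, the `i`-th argument `a i` is a term
in which `(S.far f).get i` additional variables (de Bruijn indices `0, …, kᵢ - 1`) are bound. -/
inductive Tm (S : BSig) : Type
  | bvar : ℕ → Tm S
  | fvar : ℕ → Tm S
  | app : (f : S.Fn) → (Fin (S.far f).length → Tm S) → Tm S

variable {S : BSig}

/-- `Tm.WF p t`: all de Bruijn variables of `t` are bound among the `p` ambient binders;
a *term of the language* (over named free variables) at binder depth `p`. -/
def Tm.WF : ℕ → Tm S → Prop
  | p, .bvar i => i < p
  | _, .fvar _ => True
  | p, .app f a => ∀ i, Tm.WF (p + (S.far f).get i) (a i)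

/-- Capture-avoiding substitution of the term `u` for the free variable `x`. -/
def Tm.subst (x : ℕ) (u : Tm S) : Tm S → Tm S
  | .bvar i => .bvar i
  | .fvar y => if y = x then u else .fvar y
  | .app f a => .app f (fun i => Tm.subst x u (a i))

/-- Instantiation of the bound variable `k` by the (locally closed) term `u`. -/
def Tm.openT (u : Tm S) : ℕ → Tm S → Tm S
  | k, .bvar i => if i = k then u else .bvar i
  | _, .fvar y => .fvar y
  | k, .app f a => .app f (fun i => Tm.openT u (k + (S.far f).get i) (a i))

/-- Free (named) variables of a term. -/
def Tm.fv : Tm S → Set ℕ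
  | .bvar _ => ∅
  | .fvar x => {x}
  | .app _ a => ⋃ i, (a i).fv

/-- Propositions of binding logic.  In `atom P a`, the `i`-th argument binds
`(S.par P).get i` variables; quantifiers bind one de Bruijn variable. -/
inductive Fm (S : BSig) : Type
  | atom : (P : S.Pr) → (Fin (S.par P).length → Tm S) → Fm S
  | imp : Fm S → Fm S → Fm S
  | conj : Fm S → Fm S → Fm S
  | disj : Fm S → Fm S → Fm S
  | bot : Fm S
  | all : Fm S → Fm S
  | ex : Fm S → Fm S

/-- `Fm.WF q A`: well-formedness of `A` under `q` ambient quantifiers. -/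
def Fm.WF : ℕ → Fm S → Prop
  | q, .atom P a => ∀ i, Tm.WF (q + (S.par P).get i) (a i)
  | q, .imp A B => Fm.WF q A ∧ Fm.WF q B
  | q, .conj A B => Fm.WF q A ∧ Fm.WF q B
  | q, .disj A B => Fm.WF q A ∧ Fm.WF q B
  | _, .bot => True
  | q, .all A => Fm.WF (q + 1) A
  | q, .ex A => Fm.WF (q + 1) A

/-- Free (named) variables of a proposition. -/
def Fm.fv : Fm S → Set ℕ
  | .atom _ a => ⋃ i, (a i).fv
  | .imp A B => A.fv ∪ B.fv
  | .conj A B => A.fv ∪ B.fv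
  | .disj A B => A.fv ∪ B.fv
  | .bot => ∅
  | .all A => A.fv
  | .ex A => A.fv

/-- Instantiation of the quantifier-bound variable `k` of a proposition by a term. -/
def Fm.openF (u : Tm S) : ℕ → Fm S → Fm S
  | k, .atom P a => .atom P (fun i => Tm.openT u (k + (S.par P).get i) (a i))
  | k, .imp A B => .imp (Fm.openF u k A) (Fm.openF u k B)
  | k, .conj A B => .conj (Fm.openF u k A) (Fm.openF u k B)
  | k, .disj A B => .disj (Fm.openF u k A) (Fm.openF u k B)
  | _, .bot => .bot
  | k, .all A => .all (Fm.openF u (k + 1) A)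
  | k, .ex A => .ex (Fm.openF u (k + 1) A)

/-- Capture-avoiding substitution of a term for a free variable in a proposition. -/
def Fm.subst (x : ℕ) (u : Tm S) : Fm S → Fm S
  | .atom P a => .atom P (fun i => Tm.subst x u (a i))
  | .imp A B => .imp (Fm.subst x u A) (Fm.subst x u B)
  | .conj A B => .conj (Fm.subst x u A) (Fm.subst x u B)
  | .disj A B => .disj (Fm.subst x u A) (Fm.subst x u B)
  | .bot => .bot
  | .all A => .all (Fm.subst x u A)
  | .ex A => .ex (Fm.subst x u A)

/-- Free variables of a multiset of propositions. -/
def mFv (Γ : Multiset (Fm S)) : Set ℕ := {x | ∃ A ∈ Γ, x ∈ A.fv}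

/-- The sequent calculus of binding logic: exactly the standard rules of classical
sequent calculus, with capture-avoiding substitution in the quantifier rules. -/
inductive Deriv (S : BSig) : Multiset (Fm S) → Multiset (Fm S) → Prop
  | ax (A : Fm S) : Deriv S {A} {A}
  | cut {Γ Δ : Multiset (Fm S)} {A : Fm S} :
      Deriv S (A ::ₘ Γ) Δ → Deriv S Γ (A ::ₘ Δ) → Deriv S Γ Δ
  | contrL {Γ Δ} {A : Fm S} : Deriv S (A ::ₘ A ::ₘ Γ) Δ → Deriv S (A ::ₘ Γ) Δ
  | contrR {Γ Δ} {A : Fm S} : Deriv S Γ (A ::ₘ A ::ₘ Δ) → Deriv S Γ (A ::ₘ Δ)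
  | weakL {Γ Δ} {A : Fm S} : Deriv S Γ Δ → Deriv S (A ::ₘ Γ) Δ
  | weakR {Γ Δ} {A : Fm S} : Deriv S Γ Δ → Deriv S Γ (A ::ₘ Δ)
  | impL {Γ Δ} {A B : Fm S} :
      Deriv S Γ (A ::ₘ Δ) → Deriv S (B ::ₘ Γ) Δ → Deriv S ((Fm.imp A B) ::ₘ Γ) Δ
  | impR {Γ Δ} {A B : Fm S} :
      Deriv S (A ::ₘ Γ) (B ::ₘ Δ) → Deriv S Γ ((Fm.imp A B) ::ₘ Δ)
  | conjL {Γ Δ} {A B : Fm S} :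
      Deriv S (A ::ₘ B ::ₘ Γ) Δ → Deriv S ((Fm.conj A B) ::ₘ Γ) Δ
  | conjR {Γ Δ} {A B : Fm S} :
      Deriv S Γ (A ::ₘ Δ) → Deriv S Γ (B ::ₘ Δ) → Deriv S Γ ((Fm.conj A B) ::ₘ Δ)
  | disjL {Γ Δ} {A B : Fm S} :
      Deriv S (A ::ₘ Γ) Δ → Deriv S (B ::ₘ Γ) Δ → Deriv S ((Fm.disj A B) ::ₘ Γ) Δ
  | disjR {Γ Δ} {A B : Fm S} :
      Deriv S Γ (A ::ₘ B ::ₘ Δ) → Deriv S Γ ((Fm.disj A B) ::ₘ Δ)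
  | botL {Γ Δ} : Deriv S ((Fm.bot) ::ₘ Γ) Δ
  | allL {Γ Δ} {A : Fm S} {t : Tm S} : Tm.WF 0 t →
      Deriv S ((Fm.openF t 0 A) ::ₘ Γ) Δ → Deriv S ((Fm.all A) ::ₘ Γ) Δ
  | allR {Γ Δ} {A : Fm S} {x : ℕ} :
      x ∉ mFv Γ → x ∉ mFv Δ → x ∉ A.fv →
      Deriv S Γ ((Fm.openF (Tm.fvar x) 0 A) ::ₘ Δ) → Deriv S Γ ((Fm.all A) ::ₘ Δ)
  | exL {Γ Δ} {A : Fm S} {x : ℕ} :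
      x ∉ mFv Γ → x ∉ mFv Δ → x ∉ A.fv →
      Deriv S ((Fm.openF (Tm.fvar x) 0 A) ::ₘ Γ) Δ → Deriv S ((Fm.ex A) ::ₘ Γ) Δ
  | exR {Γ Δ} {A : Fm S} {t : Tm S} : Tm.WF 0 t →
      Deriv S Γ ((Fm.openF t 0 A) ::ₘ Δ) → Deriv S Γ ((Fm.ex A) ::ₘ Δ)
/- ## The translated language L' : explicit substitutions and de Bruijn indices -/

/-- Sorts of `L'`: `tm n` for terms in a context of `n` bound variables, and
`sb n p` for explicit substitutions mapping `p` variables to terms of sort `n`. -/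
inductive Srt : Type
  | tm : ℕ → Srt
  | sb : ℕ → ℕ → Srt
deriving DecidableEq

/-- Terms of `L'`.  `evar x s` is a named variable of sort `s`; `qvar i` is a
(formula-level) de Bruijn variable bound by a quantifier; `idx i n` is the de Bruijn
constant `iₙ` (`1 ≤ i ≤ n`); `fa f p a` is `fₚ(a)`; `sub t s` is `t[s]`;
`eid n`, `cons`, `up n`, `comp` are `idₙ`, cons `.`, `↑ₙ` and composition `∘`. -/
inductive ETm (S : BSig) : Type
  | evar : ℕ → Srt → ETm S
  | qvar : ℕ → ETm S
  | idx : ℕ → ℕ → ETm S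
  | fa : (f : S.Fn) → ℕ → (Fin (S.far f).length → ETm S) → ETm S
  | sub : ETm S → ETm S → ETm S
  | eid : ℕ → ETm S
  | cons : ETm S → ETm S → ETm S
  | up : ℕ → ETm S
  | comp : ETm S → ETm S → ETm S

variable {S : BSig}

/-- The iterated shift `↑^k` out of context `p`:
`↑_p ∘ (↑_{p+1} ∘ ⋯ ∘ ↑_{p+k-1})`, of sort `⟨p+k, p⟩` (`id_p` for `k = 0`). -/
def upChain (S : BSig) (p : ℕ) : ℕ → ETm S
  | 0 => .eid p
  | 1 => .up p
  | k + 2 => .comp (.up p) (upChain S (p + 1) (k + 1))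

/-- Sorting judgment for `L'`; `Θ` gives the sorts of the quantifier-bound variables. -/
inductive HasSort : List Srt → ETm S → Srt → Prop
  | evar {Θ x s} : HasSort Θ (.evar x s) s
  | qvar {Θ i s} : Θ[i]? = some s → HasSort Θ (.qvar i) s
  | idx {Θ i n} : 1 ≤ i → i ≤ n → HasSort Θ (.idx i n) (.tm n)
  | fa {Θ} {f : S.Fn} {p : ℕ} {a : Fin (S.far f).length → ETm S} :
      (∀ j, HasSort Θ (a j) (.tm (p + (S.far f).get j))) →
      HasSort Θ (.fa f p a) (.tm p)
  | sub {Θ t s n p} : HasSort Θ t (.tm p) → HasSort Θ s (.sb n p) →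
      HasSort Θ (.sub t s) (.tm n)
  | eid {Θ n} : HasSort Θ (.eid n) (.sb n n)
  | cons {Θ t s n p} : HasSort Θ t (.tm n) → HasSort Θ s (.sb n p) →
      HasSort Θ (.cons t s) (.sb n (p + 1))
  | up {Θ n} : HasSort Θ (.up n) (.sb (n + 1) n)
  | comp {Θ s₁ s₂ n p q} : HasSort Θ s₁ (.sb p n) → HasSort Θ s₂ (.sb q p) →
      HasSort Θ (.comp s₁ s₂) (.sb q n)

/-- The component `1[↑^j]` (of sort `q+k`, with `1` of sort `q+k-j`). -/
def shiftOne (S : BSig) (q k j : ℕ) : ETm S :=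
  if j = 0 then .idx 1 (q + k) else .sub (.idx 1 (q + k - j)) (upChain S (q + k - j) j)

/-- Auxiliary: builds `1[↑^j]. … .1[↑^{k-1}].(s ∘ ↑^k)`. -/
def liftAux (S : BSig) (q k : ℕ) (s : ETm S) : ℕ → ℕ → ETm S
  | 0, _ => .comp s (upChain S q k)
  | m + 1, j => .cons (shiftOne S q k j) (liftAux S q k s m (j + 1))

/-- The substitution `1.1[↑].….1[↑^{k−1}].(s ∘ ↑^k)` of sort `⟨q+k, p+k⟩`,
for `s` of sort `⟨q,p⟩` (just `s` when `k = 0`). -/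
def liftSub (S : BSig) (q k : ℕ) (s : ETm S) : ETm S :=
  match k with
  | 0 => s
  | k' + 1 => liftAux S q (k' + 1) s (k' + 1) 0

/-- One step of `σ`-rewriting (at the root or in any subterm). -/
inductive Rw : ETm S → ETm S → Prop
  -- the rule n+1 → 1[↑ⁿ]
  | ridx {i n : ℕ} : 1 ≤ i → i + 1 ≤ n →
      Rw (.idx (i + 1) n) (.sub (.idx 1 (n - i)) (upChain S (n - i) i))
  -- 1[t.s] → t
  | rhead {m : ℕ} {t s : ETm S} : Rw (.sub (.idx 1 m) (.cons t s)) t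
  -- t[id] → t
  | rtid {n : ℕ} {t : ETm S} : Rw (.sub t (.eid n)) t
  -- (t[s])[s'] → t[s ∘ s']
  | rclos {t s s' : ETm S} : Rw (.sub (.sub t s) s') (.sub t (.comp s s'))
  -- id ∘ s → s
  | ridl {n : ℕ} {s : ETm S} : Rw (.comp (.eid n) s) s
  -- ↑ ∘ (t.s) → s
  | rshcons {n : ℕ} {t s : ETm S} : Rw (.comp (.up n) (.cons t s)) s
  -- (s₁ ∘ s₂) ∘ s₃ → s₁ ∘ (s₂ ∘ s₃)
  | rassoc {s₁ s₂ s₃ : ETm S} : Rw (.comp (.comp s₁ s₂) s₃) (.comp s₁ (.comp s₂ s₃))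
  -- (t.s) ∘ s' → t[s'].(s ∘ s')
  | rmap {t s s' : ETm S} : Rw (.comp (.cons t s) s') (.cons (.sub t s') (.comp s s'))
  -- s ∘ id → s
  | ridr {n : ℕ} {s : ETm S} : Rw (.comp s (.eid n)) s
  -- 1.↑ → id
  | rvarsh {n : ℕ} : Rw (.cons (.idx 1 (n + 1)) (.up n)) (.eid (n + 1))
  -- 1[s].(↑ ∘ s) → s
  | rscons {m n : ℕ} {s : ETm S} : Rw (.cons (.sub (.idx 1 m) s) (.comp (.up n) s)) s
  -- fₚ(t₁,…,tₙ)[s] → f_q(t₁[1.1[↑].….1[↑^{k₁−1}].s∘↑^{k₁}], …) for s of sort ⟨q,p⟩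
  | rfa {f : S.Fn} {p q : ℕ} {a : Fin (S.far f).length → ETm S} {s : ETm S} :
      (∃ Θ, HasSort Θ s (.sb q p)) →
      Rw (.sub (.fa f p a) s)
         (.fa f q (fun i => .sub (a i) (liftSub S q ((S.far f).get i) s)))
  -- congruence: rewriting in subterms
  | cfa {f : S.Fn} {p : ℕ} {a : Fin (S.far f).length → ETm S}
      {i : Fin (S.far f).length} {t' : ETm S} :
      Rw (a i) t' → Rw (.fa f p a) (.fa f p (Function.update a i t'))
  | csub₁ {t t' s : ETm S} : Rw t t' → Rw (.sub t s) (.sub t' s)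
  | csub₂ {t s s' : ETm S} : Rw s s' → Rw (.sub t s) (.sub t s')
  | ccons₁ {t t' s : ETm S} : Rw t t' → Rw (.cons t s) (.cons t' s)
  | ccons₂ {t s s' : ETm S} : Rw s s' → Rw (.cons t s) (.cons t s')
  | ccomp₁ {t t' s : ETm S} : Rw t t' → Rw (.comp t s) (.comp t' s)
  | ccomp₂ {t s s' : ETm S} : Rw s s' → Rw (.comp t s) (.comp t s')

/-- The congruence `≡` on terms of `L'` generated by the rewrite system `σ`. -/
def TmConv (S : BSig) : ETm S → ETm S → Prop := Relation.EqvGen Rw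

/-- A term is `σ`-normal if no rewrite step applies to it. -/
def ENormal (t : ETm S) : Prop := ∀ u, ¬ Rw t u

/-- Propositions of `L'` (quantifiers bind one variable of the indicated sort,
represented by formula-level de Bruijn indices `qvar`). -/
inductive EFm (S : BSig) : Type
  | atom : (P : S.Pr) → (Fin (S.par P).length → ETm S) → EFm S
  | imp : EFm S → EFm S → EFm S
  | conj : EFm S → EFm S → EFm S
  | disj : EFm S → EFm S → EFm S
  | bot : EFm S
  | all : Srt → EFm S → EFm S
  | ex : Srt → EFm S → EFm S

/-- Replacement of the quantifier-bound variable `k` by a term (in a term of `L'`). -/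
def ETm.openE (u : ETm S) (k : ℕ) : ETm S → ETm S
  | .qvar i => if i = k then u else .qvar i
  | .evar x s => .evar x s
  | .idx i n => .idx i n
  | .fa f p a => .fa f p (fun j => ETm.openE u k (a j))
  | .sub t s => .sub (ETm.openE u k t) (ETm.openE u k s)
  | .eid n => .eid n
  | .cons t s => .cons (ETm.openE u k t) (ETm.openE u k s)
  | .up n => .up n
  | .comp t s => .comp (ETm.openE u k t) (ETm.openE u k s)

/-- Instantiation of the quantifier-bound variable `k` of a proposition of `L'`. -/
def EFm.openF (u : ETm S) : ℕ → EFm S → EFm S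
  | k, .atom P a => .atom P (fun i => ETm.openE u k (a i))
  | k, .imp A B => .imp (EFm.openF u k A) (EFm.openF u k B)
  | k, .conj A B => .conj (EFm.openF u k A) (EFm.openF u k B)
  | k, .disj A B => .disj (EFm.openF u k A) (EFm.openF u k B)
  | _, .bot => .bot
  | k, .all s A => .all s (EFm.openF u (k + 1) A)
  | k, .ex s A => .ex s (EFm.openF u (k + 1) A)

/-- Names of the free named variables of a term of `L'`. -/
def ETm.fvs : ETm S → Set ℕ
  | .evar x _ => {x}
  | .qvar _ => ∅
  | .idx _ _ => ∅
  | .fa _ _ a => ⋃ i, (a i).fvs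
  | .sub t s => t.fvs ∪ s.fvs
  | .eid _ => ∅
  | .cons t s => t.fvs ∪ s.fvs
  | .up _ => ∅
  | .comp t s => t.fvs ∪ s.fvs

/-- Names of the free named variables of a proposition of `L'`. -/
def EFm.fvs : EFm S → Set ℕ
  | .atom _ a => ⋃ i, (a i).fvs
  | .imp A B => A.fvs ∪ B.fvs
  | .conj A B => A.fvs ∪ B.fvs
  | .disj A B => A.fvs ∪ B.fvs
  | .bot => ∅
  | .all _ A => A.fvs
  | .ex _ A => A.fvs

/-- Free variables of a multiset of `L'`-propositions. -/
def mFvE (Γ : Multiset (EFm S)) : Set ℕ := {x | ∃ A ∈ Γ, x ∈ A.fvs}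

/-- The congruence on propositions of `L'` generated by `σ`
(congruent atoms have `≡`-congruent arguments). -/
inductive FConv : EFm S → EFm S → Prop
  | atom {P : S.Pr} {a b : Fin (S.par P).length → ETm S} :
      (∀ i, TmConv S (a i) (b i)) → FConv (.atom P a) (.atom P b)
  | imp {A A' B B'} : FConv A A' → FConv B B' → FConv (.imp A B) (.imp A' B')
  | conj {A A' B B'} : FConv A A' → FConv B B' → FConv (.conj A B) (.conj A' B')
  | disj {A A' B B'} : FConv A A' → FConv B B' → FConv (.disj A B) (.disj A' B')
  | bot : FConv .bot .bot
  | all {s A A'} : FConv A A' → FConv (.all s A) (.all s A')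
  | ex {s A A'} : FConv A A' → FConv (.ex s A) (.ex s A')

/-- Sequent calculus modulo a congruence `E`, with proof length recorded:
the standard classical rules, where principal formulas need only be congruent
to the displayed shape.  `DerivM E n Γ Δ` : `Γ ⊢ Δ` has a proof of length `n`. -/
inductive DerivM (E : EFm S → EFm S → Prop) : ℕ → Multiset (EFm S) → Multiset (EFm S) → Prop
  | ax {A B : EFm S} : E A B → DerivM E 1 {A} {B}
  | cut {m n Γ Δ} {A B : EFm S} : E A B →
      DerivM E m (A ::ₘ Γ) Δ → DerivM E n Γ (B ::ₘ Δ) → DerivM E (m + n + 1) Γ Δ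
  | contrL {m Γ Δ} {A B₁ B₂ : EFm S} : E A B₁ → E A B₂ →
      DerivM E m (B₁ ::ₘ B₂ ::ₘ Γ) Δ → DerivM E (m + 1) (A ::ₘ Γ) Δ
  | contrR {m Γ Δ} {A B₁ B₂ : EFm S} : E A B₁ → E A B₂ →
      DerivM E m Γ (B₁ ::ₘ B₂ ::ₘ Δ) → DerivM E (m + 1) Γ (A ::ₘ Δ)
  | weakL {m Γ Δ} {A : EFm S} : DerivM E m Γ Δ → DerivM E (m + 1) (A ::ₘ Γ) Δ
  | weakR {m Γ Δ} {A : EFm S} : DerivM E m Γ Δ → DerivM E (m + 1) Γ (A ::ₘ Δ)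
  | impL {m n Γ Δ} {C A B : EFm S} : E C (.imp A B) →
      DerivM E m Γ (A ::ₘ Δ) → DerivM E n (B ::ₘ Γ) Δ → DerivM E (m + n + 1) (C ::ₘ Γ) Δ
  | impR {m Γ Δ} {C A B : EFm S} : E C (.imp A B) →
      DerivM E m (A ::ₘ Γ) (B ::ₘ Δ) → DerivM E (m + 1) Γ (C ::ₘ Δ)
  | conjL {m Γ Δ} {C A B : EFm S} : E C (.conj A B) →
      DerivM E m (A ::ₘ B ::ₘ Γ) Δ → DerivM E (m + 1) (C ::ₘ Γ) Δ
  | conjR {m n Γ Δ} {C A B : EFm S} : E C (.conj A B) →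
      DerivM E m Γ (A ::ₘ Δ) → DerivM E n Γ (B ::ₘ Δ) → DerivM E (m + n + 1) Γ (C ::ₘ Δ)
  | disjL {m n Γ Δ} {C A B : EFm S} : E C (.disj A B) →
      DerivM E m (A ::ₘ Γ) Δ → DerivM E n (B ::ₘ Γ) Δ → DerivM E (m + n + 1) (C ::ₘ Γ) Δ
  | disjR {m Γ Δ} {C A B : EFm S} : E C (.disj A B) →
      DerivM E m Γ (A ::ₘ B ::ₘ Δ) → DerivM E (m + 1) Γ (C ::ₘ Δ)
  | botL {Γ Δ} {A : EFm S} : E A .bot → DerivM E 1 (A ::ₘ Γ) Δ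
  | allL {m Γ Δ} {B C A : EFm S} {s : Srt} {t : ETm S} :
      E B (.all s A) → E C (EFm.openF t 0 A) → HasSort [] t s →
      DerivM E m (C ::ₘ Γ) Δ → DerivM E (m + 1) (B ::ₘ Γ) Δ
  | allR {m Γ Δ} {B A : EFm S} {s : Srt} {x : ℕ} :
      E B (.all s A) → x ∉ mFvE Γ → x ∉ mFvE Δ → x ∉ A.fvs →
      DerivM E m Γ ((EFm.openF (.evar x s) 0 A) ::ₘ Δ) → DerivM E (m + 1) Γ (B ::ₘ Δ)
  | exL {m Γ Δ} {B A : EFm S} {s : Srt} {x : ℕ} :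
      E B (.ex s A) → x ∉ mFvE Γ → x ∉ mFvE Δ → x ∉ A.fvs →
      DerivM E m ((EFm.openF (.evar x s) 0 A) ::ₘ Γ) Δ → DerivM E (m + 1) (B ::ₘ Γ) Δ
  | exR {m Γ Δ} {B C A : EFm S} {s : Srt} {t : ETm S} :
      E B (.ex s A) → E C (EFm.openF t 0 A) → HasSort [] t s →
      DerivM E m Γ (C ::ₘ Δ) → DerivM E (m + 1) Γ (B ::ₘ Δ)

/-- Provability in sequent calculus modulo the congruence `E`. -/
def DerivMod (E : EFm S → EFm S → Prop) (Γ Δ : Multiset (EFm S)) : Prop :=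
  ∃ n, DerivM E n Γ Δ

/- ## Pre-cooking : the translation from L to L' -/

/-- Pre-cooking of a term at binder depth `p` (the length of the list `l` of
bound variables): binder-bound variables become de Bruijn constants, other
variables are protected by the shift `↑^p`. -/
def Ft (S : BSig) : (p : ℕ) → Tm S → ETm S
  | p, .bvar i =>
      if i < p then .idx (i + 1) p
      else if p = 0 then .qvar (i - p) else .sub (.qvar (i - p)) (upChain S 0 p)
  | p, .fvar x =>
      if p = 0 then .evar x (.tm 0) else .sub (.evar x (.tm 0)) (upChain S 0 p)
  | p, .app f a => .fa f p (fun i => Ft S (p + (S.far f).get i) (a i))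

/-- Pre-cooking of a proposition: `A' = F(A, ε)`. -/
def Ff (S : BSig) : Fm S → EFm S
  | .atom P a => .atom P (fun i => Ft S ((S.par P).get i) (a i))
  | .imp A B => .imp (Ff S A) (Ff S B)
  | .conj A B => .conj (Ff S A) (Ff S B)
  | .disj A B => .disj (Ff S A) (Ff S B)
  | .bot => .bot
  | .all A => .all (.tm 0) (Ff S A)
  | .ex A => .ex (.tm 0) (Ff S A)

/-- Grafting `⟨v/x⟩t` in `L'`: textual replacement of the (sort-0) variable `x` by `v`. -/
def ETm.graft (x : ℕ) (v : ETm S) : ETm S → ETm S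
  | .evar y s => if y = x ∧ s = .tm 0 then v else .evar y s
  | .qvar i => .qvar i
  | .idx i n => .idx i n
  | .fa f p a => .fa f p (fun j => ETm.graft x v (a j))
  | .sub t s => .sub (ETm.graft x v t) (ETm.graft x v s)
  | .eid n => .eid n
  | .cons t s => .cons (ETm.graft x v t) (ETm.graft x v s)
  | .up n => .up n
  | .comp t s => .comp (ETm.graft x v t) (ETm.graft x v s)

/-- Substitution `(v/x)A` of a (quantifier-closed) term for a variable in a
proposition of `L'` (capture-avoiding, since terms of `L'` have no binders). -/
def EFm.graft (x : ℕ) (v : ETm S) : EFm S → EFm S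
  | .atom P a => .atom P (fun i => ETm.graft x v (a i))
  | .imp A B => .imp (EFm.graft x v A) (EFm.graft x v B)
  | .conj A B => .conj (EFm.graft x v A) (EFm.graft x v B)
  | .disj A B => .disj (EFm.graft x v A) (EFm.graft x v B)
  | .bot => .bot
  | .all s A => .all s (EFm.graft x v A)
  | .ex s A => .ex s (EFm.graft x v A)

/- ## F-terms and F-propositions -/

/-- All named variables occurring in the term have sort `0`. -/
def ETm.vars0 : ETm S → Prop
  | .evar _ s => s = .tm 0
  | .qvar _ => True
  | .idx _ _ => True
  | .fa _ _ a => ∀ i, (a i).vars0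
  | .sub t s => t.vars0 ∧ s.vars0
  | .eid _ => True
  | .cons t s => t.vars0 ∧ s.vars0
  | .up _ => True
  | .comp t s => t.vars0 ∧ s.vars0

/-- All named variables of the proposition have sort `0`, and all its
quantifiers bind variables of sort `0`. -/
def EFm.vars0F : EFm S → Prop
  | .atom _ a => ∀ i, (a i).vars0
  | .imp A B => A.vars0F ∧ B.vars0F
  | .conj A B => A.vars0F ∧ B.vars0F
  | .disj A B => A.vars0F ∧ B.vars0F
  | .bot => True
  | .all s A => s = .tm 0 ∧ A.vars0F
  | .ex s A => s = .tm 0 ∧ A.vars0F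

/-- The proposition is `σ`-normal: every term occurring in it is `σ`-normal. -/
def EFm.TmsNormal : EFm S → Prop
  | .atom _ a => ∀ i, ENormal (a i)
  | .imp A B => A.TmsNormal ∧ B.TmsNormal
  | .conj A B => A.TmsNormal ∧ B.TmsNormal
  | .disj A B => A.TmsNormal ∧ B.TmsNormal
  | .bot => True
  | .all _ A => A.TmsNormal
  | .ex _ A => A.TmsNormal

/-- Well-sortedness of a proposition of `L'` in a context `Θ` of quantified sorts. -/
def EFmSorted : List Srt → EFm S → Prop
  | Θ, .atom P a => ∀ i, HasSort Θ (a i) (.tm ((S.par P).get i))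
  | Θ, .imp A B => EFmSorted Θ A ∧ EFmSorted Θ B
  | Θ, .conj A B => EFmSorted Θ A ∧ EFmSorted Θ B
  | Θ, .disj A B => EFmSorted Θ A ∧ EFmSorted Θ B
  | _, .bot => True
  | Θ, .all s A => EFmSorted (s :: Θ) A
  | Θ, .ex s A => EFmSorted (s :: Θ) A

/-- An F-proposition: a `σ`-normal, well-sorted proposition of `L'` containing
only variables of sort `0`. -/
def FProp (A : EFm S) : Prop := A.TmsNormal ∧ A.vars0F ∧ EFmSorted [] A

/-- An F-term of sort `0`: a `σ`-normal, well-sorted term of sort `0` of `L'`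
containing only variables of sort `0`. -/
def FTerm0 (t : ETm S) : Prop := ENormal t ∧ t.vars0 ∧ HasSort [] t (.tm 0)

/- ## Auxiliary development for the substitution/grafting theorem -/

section Aux
variable {S : BSig}

theorem conv_rel {a b : ETm S} (h : Rw a b) : TmConv S a b := Relation.EqvGen.rel a b h
theorem conv_refl (a : ETm S) : TmConv S a a := Relation.EqvGen.refl a
theorem conv_symm {a b : ETm S} (h : TmConv S a b) : TmConv S b a := Relation.EqvGen.symm a b h
theorem conv_trans {a b c : ETm S} (h1 : TmConv S a b) (h2 : TmConv S b c) : TmConv S a c :=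
  Relation.EqvGen.trans a b c h1 h2

theorem conv_congr {F : ETm S → ETm S}
    (hF : ∀ {u v : ETm S}, Rw u v → Rw (F u) (F v)) {a b : ETm S}
    (h : TmConv S a b) : TmConv S (F a) (F b) := by
  induction h with
  | rel u v h => exact conv_rel (hF h)
  | refl u => exact conv_refl _
  | symm u v _ ih => exact conv_symm ih
  | trans u v w _ _ ih1 ih2 => exact conv_trans ih1 ih2

theorem conv_sub₁ {a b s : ETm S} (h : TmConv S a b) : TmConv S (.sub a s) (.sub b s) :=
  conv_congr (fun h => Rw.csub₁ h) h
theorem conv_sub₂ {t a b : ETm S} (h : TmConv S a b) : TmConv S (.sub t a) (.sub t b) :=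
  conv_congr (fun h => Rw.csub₂ h) h
theorem conv_comp₁ {a b s : ETm S} (h : TmConv S a b) : TmConv S (.comp a s) (.comp b s) :=
  conv_congr (fun h => Rw.ccomp₁ h) h
theorem conv_comp₂ {t a b : ETm S} (h : TmConv S a b) : TmConv S (.comp t a) (.comp t b) :=
  conv_congr (fun h => Rw.ccomp₂ h) h

theorem conv_update {f : S.Fn} {p : ℕ} {u v : ETm S} (h : TmConv S u v) :
    ∀ (a : Fin (S.far f).length → ETm S) (i : Fin (S.far f).length),
      TmConv S (.fa f p (Function.update a i u)) (.fa f p (Function.update a i v)) := by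
  induction h with
  | rel u v h =>
      intro a i
      have h1 : Rw ((Function.update a i u) i) v := by rw [Function.update_self]; exact h
      have := Rw.cfa (p := p) (i := i) h1
      rw [Function.update_idem] at this
      exact conv_rel this
  | refl u => intro a i; exact conv_refl _
  | symm u v _ ih => intro a i; exact conv_symm (ih a i)
  | trans u v w _ _ ih1 ih2 => intro a i; exact conv_trans (ih1 a i) (ih2 a i)

theorem conv_fa {f : S.Fn} {p : ℕ} {a b : Fin (S.far f).length → ETm S}
    (h : ∀ i, TmConv S (a i) (b i)) : TmConv S (.fa f p a) (.fa f p b) := by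
  have main : ∀ (s : Finset (Fin (S.far f).length)),
      TmConv S (.fa f p a) (.fa f p (fun i => if i ∈ s then b i else a i)) := by
    intro s
    induction s using Finset.induction with
    | empty => simpa using conv_refl (ETm.fa f p a)
    | @insert j s hj ih =>
        refine conv_trans ih ?_
        have h1 := conv_update (f := f) (p := p) (h j)
          (fun i => if i ∈ s then b i else a i) j
        have e1 : Function.update (fun i => if i ∈ s then b i else a i) j (a j)
            = (fun i => if i ∈ s then b i else a i) := by
          funext i
          by_cases hij : i = j
          · subst hij; simp [Function.update_self, hj]
          · simp [Function.update_of_ne hij]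
        have e2 : Function.update (fun i => if i ∈ s then b i else a i) j (b j)
            = (fun i => if i ∈ Insert.insert j s then b i else a i) := by
          funext i
          by_cases hij : i = j
          · subst hij; simp
          · simp [Function.update_of_ne hij, hij]
        rw [e1, e2] at h1
        exact h1
  have := main Finset.univ
  simpa using this

/- ### Sorting lemmas -/

theorem upChain_sort {Θ : List Srt} : ∀ (k q : ℕ), HasSort Θ (upChain S q k) (.sb (q + k) q)
  | 0, q => HasSort.eid
  | 1, q => HasSort.up
  | (k + 2), q => by
      have h2 := upChain_sort (Θ := Θ) (k + 1) (q + 1)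
      have : HasSort Θ (.comp (.up q) (upChain S (q + 1) (k + 1))) (.sb (q + 1 + (k + 1)) q) :=
        HasSort.comp HasSort.up h2
      rw [show q + 1 + (k + 1) = q + (k + 2) from by omega] at this
      exact this

theorem shiftOne_sort {Θ : List Srt} {q k j : ℕ} (hj : j < q + k) :
    HasSort Θ (shiftOne S q k j) (.tm (q + k)) := by
  unfold shiftOne
  by_cases h0 : j = 0
  · rw [if_pos h0]; exact HasSort.idx le_rfl (by omega)
  · rw [if_neg h0]
    have h1 : HasSort (S := S) Θ (.idx 1 (q + k - j)) (.tm (q + k - j)) :=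
      HasSort.idx le_rfl (by omega)
    have h2 := upChain_sort (S := S) (Θ := Θ) j (q + k - j)
    rw [show q + k - j + j = q + k from by omega] at h2
    exact HasSort.sub h1 h2

theorem liftAux_sort {Θ : List Srt} {q p' m : ℕ} {s : ETm S}
    (hs : HasSort Θ s (.sb q p')) :
    ∀ (c j : ℕ), j + c ≤ m → HasSort Θ (liftAux S q m s c j) (.sb (q + m) (p' + c))
  | 0, j, _ => HasSort.comp hs (upChain_sort m q)
  | (c + 1), j, h => by
      have hrest := liftAux_sort (m := m) hs c (j + 1) (by omega)
      exact HasSort.cons (shiftOne_sort (q := q) (k := m) (j := j) (by omega)) hrest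

theorem liftSub_sort {Θ : List Srt} {q p' : ℕ} {s : ETm S}
    (hs : HasSort Θ s (.sb q p')) (m : ℕ) :
    HasSort Θ (liftSub S q m s) (.sb (q + m) (p' + m)) := by
  cases m with
  | zero => exact hs
  | succ m' => exact liftAux_sort hs (m' + 1) 0 (by omega)

/- ### Rewriting computations on chains -/

theorem upChain_split : ∀ (a b q : ℕ),
    TmConv S (upChain S q (a + b)) (.comp (upChain S q a) (upChain S (q + a) b))
  | 0, b, q => by
      rw [Nat.zero_add]
      exact conv_symm (conv_rel Rw.ridl)
  | 1, 0, q => conv_symm (conv_rel Rw.ridr)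
  | 1, (b + 1), q => by
      rw [show 1 + (b + 1) = b + 1 + 1 from by omega]
      cases b with
      | zero => exact conv_refl _
      | succ b' => exact conv_refl _
  | (a + 2), b, q => by
      have ih := upChain_split (a + 1) b (q + 1)
      have step1 : upChain S q (a + 2 + b) = .comp (.up q) (upChain S (q + 1) (a + 1 + b)) := by
        rw [show a + 2 + b = (a + b) + 2 from by omega]
        rw [show a + 1 + b = (a + b) + 1 from by omega]
        rfl
      rw [step1]
      refine conv_trans (conv_comp₂ ih) ?_
      refine conv_trans (conv_symm (conv_rel Rw.rassoc)) ?_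
      rw [show q + 1 + (a + 1) = q + (a + 2) from by omega]
      exact conv_refl _

theorem dropOne {c w : ℕ} {h r : ETm S} :
    TmConv S (.comp (upChain S w (c + 1)) (.cons h r)) (.comp (upChain S w c) r) := by
  refine conv_trans (conv_comp₁ (upChain_split c 1 w)) ?_
  refine conv_trans (conv_rel Rw.rassoc) ?_
  exact conv_comp₂ (conv_rel Rw.rshcons)

theorem dropAll {q m : ℕ} {s : ETm S} :
    ∀ (c j w : ℕ), TmConv S (.comp (upChain S w c) (liftAux S q m s c j))
      (.comp s (upChain S q m))
  | 0, j, w => conv_rel Rw.ridl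
  | (c + 1), j, w => conv_trans dropOne (dropAll c (j + 1) w)

theorem sel {q m : ℕ} {s : ETm S} :
    ∀ (i c j w : ℕ), i < c →
      TmConv S (.comp (upChain S w i) (liftAux S q m s c j)) (liftAux S q m s (c - i) (j + i))
  | 0, c, j, w, _ => conv_rel Rw.ridl
  | (i + 1), 0, j, w, h => absurd h (by omega)
  | (i + 1), (c + 1), j, w, h => by
      refine conv_trans dropOne ?_
      have ih := sel (q := q) (m := m) (s := s) i c (j + 1) w (by omega)
      rw [show c + 1 - (i + 1) = c - i from by omega,
          show j + (i + 1) = j + 1 + i from by omega]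
      exact ih

theorem idx_up : ∀ (m j n : ℕ), 1 ≤ j → j ≤ n →
    TmConv S (.sub (.idx j n) (upChain S n m)) (.idx (j + m) (n + m))
  | 0, j, n, _, _ => conv_rel Rw.rtid
  | (m + 1), 1, n, _, h2 => by
      have hr : Rw (S := S) (.idx (m + 1 + 1) (n + (m + 1)))
          (.sub (.idx 1 (n + (m + 1) - (m + 1))) (upChain S (n + (m + 1) - (m + 1)) (m + 1))) :=
        Rw.ridx (by omega) (by omega)
      rw [show n + (m + 1) - (m + 1) = n from by omega] at hr
      rw [show 1 + (m + 1) = m + 1 + 1 from by omega]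
      exact conv_symm (conv_rel hr)
  | (m + 1), (j + 2), n, _, h2 => by
      have h1 : Rw (S := S) (.idx (j + 2) n)
          (.sub (.idx 1 (n - (j + 1))) (upChain S (n - (j + 1)) (j + 1))) :=
        Rw.ridx (by omega) h2
      refine conv_trans (conv_sub₁ (conv_rel h1)) ?_
      refine conv_trans (conv_rel Rw.rclos) ?_
      have hsplit := upChain_split (S := S) (j + 1) (m + 1) (n - (j + 1))
      rw [show n - (j + 1) + (j + 1) = n from by omega] at hsplit
      refine conv_trans (conv_sub₂ (conv_symm hsplit)) ?_
      have hr : Rw (S := S) (.idx (j + 1 + (m + 1) + 1) (n + (m + 1)))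
          (.sub (.idx 1 (n + (m + 1) - (j + 1 + (m + 1))))
            (upChain S (n + (m + 1) - (j + 1 + (m + 1))) (j + 1 + (m + 1)))) :=
        Rw.ridx (by omega) (by omega)
      rw [show n + (m + 1) - (j + 1 + (m + 1)) = n - (j + 1) from by omega] at hr
      rw [show j + 2 + (m + 1) = j + 1 + (m + 1) + 1 from by omega]
      rw [show j + 1 + (m + 1) = j + 1 + m + 1 from by omega] at hr ⊢
      exact conv_symm (conv_rel hr)

/- ### The shift operation and good substitutions -/

/-- `t` protected by the shift `↑^m` (just `t` when `m = 0`). -/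
def shiftT (S : BSig) (m : ℕ) (t : ETm S) : ETm S :=
  if m = 0 then t else .sub t (upChain S 0 m)

theorem Ft_fvar (p x : ℕ) : Ft S p (.fvar x) = shiftT S p (.evar x (.tm 0)) := rfl

theorem shiftT_sub {k : ℕ} {t s : ETm S} :
    TmConv S (.sub (shiftT S k t) s) (.sub t (.comp (upChain S 0 k) s)) := by
  cases k with
  | zero => exact conv_symm (conv_sub₂ (conv_rel Rw.ridl))
  | succ k' =>
      show TmConv S (.sub (.sub t (upChain S 0 (k' + 1))) s) _
      exact conv_rel Rw.rclos

/-- A substitution behaving like the lifting by `k` binders of the shift `↑^p`. -/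
structure Good (S : BSig) (p k : ℕ) (s : ETm S) : Prop where
  srt : ∃ Θ, HasSort Θ s (.sb (p + k) k)
  bv : ∀ i, i < k → TmConv S (.sub (.idx (i + 1) k) s) (.idx (i + 1) (p + k))
  sh : ∀ t, TmConv S (.sub (shiftT S k t) s) (shiftT S (p + k) t)

theorem good_up (p : ℕ) : Good S p 0 (upChain S 0 p) := by
  refine ⟨⟨[], ?_⟩, ?_, ?_⟩
  · have := upChain_sort (S := S) (Θ := []) p 0
    rwa [Nat.zero_add] at this
  · intro i hi; omega
  · intro t
    show TmConv S (.sub t (upChain S 0 p)) (shiftT S p t)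
    cases p with
    | zero => exact conv_rel Rw.rtid
    | succ p' => exact conv_refl _

theorem good_lift {p k : ℕ} {s : ETm S} (hg : Good S p k s) (m : ℕ) :
    Good S p (k + m) (liftSub S (p + k) m s) := by
  cases m with
  | zero => exact hg
  | succ m' =>
    set M := m' + 1 with hM
    obtain ⟨Θ, hΘ⟩ := hg.srt
    have hL : liftSub S (p + k) M s = liftAux S (p + k) M s M 0 := rfl
    refine ⟨⟨Θ, ?_⟩, ?_, ?_⟩
    · have := liftSub_sort hΘ M
      rwa [show p + k + M = p + (k + M) from by omega] at this
    · -- bound variables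
      intro i hi
      rcases Nat.lt_or_ge i M with hiM | hiM
      · -- i < M : select the i-th component of the chain
        rcases Nat.eq_zero_or_pos i with h0 | hpos
        · subst h0
          rw [hL, hM]
          show TmConv S (.sub (.idx 1 (k + (m' + 1)))
            (.cons (shiftOne S (p + k) (m' + 1) 0) (liftAux S (p + k) (m' + 1) s m' 1)))
            (.idx 1 (p + (k + (m' + 1))))
          refine conv_trans (conv_rel Rw.rhead) ?_
          unfold shiftOne
          rw [if_pos rfl, show p + k + (m' + 1) = p + (k + (m' + 1)) from by omega]
          exact conv_refl _
        · have h1 : Rw (S := S) (.idx (i + 1) (k + M))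
              (.sub (.idx 1 (k + M - i)) (upChain S (k + M - i) i)) :=
            Rw.ridx hpos (by omega)
          refine conv_trans (conv_sub₁ (conv_rel h1)) ?_
          refine conv_trans (conv_rel Rw.rclos) ?_
          rw [hL]
          have hsel := sel (q := p + k) (m := M) (s := s) i M 0 (k + M - i) hiM
          rw [Nat.zero_add] at hsel
          refine conv_trans (conv_sub₂ hsel) ?_
          obtain ⟨d, hd⟩ : ∃ d, M - i = d + 1 := ⟨M - i - 1, by omega⟩
          rw [hd]
          show TmConv S (.sub (.idx 1 (k + M - i))
            (.cons (shiftOne S (p + k) M i) (liftAux S (p + k) M s d (i + 1)))) _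
          refine conv_trans (conv_rel Rw.rhead) ?_
          unfold shiftOne
          rw [if_neg (by omega)]
          have hr : Rw (S := S) (.idx (i + 1) (p + (k + M)))
              (.sub (.idx 1 (p + (k + M) - i)) (upChain S (p + (k + M) - i) i)) :=
            Rw.ridx hpos (by omega)
          rw [show p + (k + M) - i = p + k + M - i from by omega] at hr
          exact conv_symm (conv_rel hr)
      · -- M ≤ i < k + M : go through s
        set i' := i - M with hi'
        have hii : i = i' + M := by omega
        have hi'k : i' < k := by omega
        have h1 : Rw (S := S) (.idx (i + 1) (k + M))
            (.sub (.idx 1 (k + M - i)) (upChain S (k + M - i) i)) :=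
          Rw.ridx (by omega) (by omega)
        refine conv_trans (conv_sub₁ (conv_rel h1)) ?_
        refine conv_trans (conv_rel Rw.rclos) ?_
        have hkmi : k + M - i = k - i' := by omega
        have hsplit := upChain_split (S := S) i' M (k + M - i)
        rw [hkmi] at hsplit ⊢
        rw [show k - i' + i' = k from by omega] at hsplit
        rw [hii]
        refine conv_trans (conv_sub₂ (conv_comp₁ hsplit)) ?_
        refine conv_trans (conv_sub₂ (conv_rel Rw.rassoc)) ?_
        rw [hL]
        refine conv_trans (conv_sub₂ (conv_comp₂ (dropAll M 0 k))) ?_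
        refine conv_trans (conv_sub₂ (conv_symm (conv_rel Rw.rassoc))) ?_
        refine conv_trans (conv_symm (conv_rel Rw.rclos)) ?_
        refine conv_trans (conv_sub₁ (conv_symm (conv_rel Rw.rclos))) ?_
        have hidx1 := idx_up (S := S) i' 1 (k - i') le_rfl (by omega)
        rw [show k - i' + i' = k from by omega, show 1 + i' = i' + 1 from by omega] at hidx1
        refine conv_trans (conv_sub₁ (conv_sub₁ hidx1)) ?_
        refine conv_trans (conv_sub₁ (hg.bv i' hi'k)) ?_
        have hidx2 := idx_up (S := S) M (i' + 1) (p + k) (by omega) (by omega)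
        rw [show i' + 1 + M = i' + M + 1 from by omega,
            show p + k + M = p + (k + M) from by omega] at hidx2
        exact hidx2
    · -- shifted terms
      intro t
      refine conv_trans shiftT_sub ?_
      have hsplit := upChain_split (S := S) k M 0
      rw [Nat.zero_add] at hsplit
      refine conv_trans (conv_sub₂ (conv_comp₁ hsplit)) ?_
      refine conv_trans (conv_sub₂ (conv_rel Rw.rassoc)) ?_
      rw [hL]
      refine conv_trans (conv_sub₂ (conv_comp₂ (dropAll M 0 k))) ?_
      refine conv_trans (conv_sub₂ (conv_symm (conv_rel Rw.rassoc))) ?_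
      refine conv_trans (conv_symm (conv_rel Rw.rclos)) ?_
      refine conv_trans (conv_sub₁ (conv_symm shiftT_sub)) ?_
      refine conv_trans (conv_sub₁ (hg.sh t)) ?_
      refine conv_trans shiftT_sub ?_
      have hsplit2 := upChain_split (S := S) (p + k) M 0
      rw [Nat.zero_add] at hsplit2
      refine conv_trans (conv_sub₂ (conv_symm hsplit2)) ?_
      show TmConv S (.sub t (upChain S 0 (p + k + M))) (shiftT S (p + (k + M)) t)
      rw [show p + (k + M) = p + k + M from by omega]
      unfold shiftT
      rw [if_neg (by omega)]
      exact conv_refl _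

/- ### The key shift lemma -/

theorem key : ∀ (u : Tm S) {k p : ℕ} {s : ETm S}, Tm.WF k u → Good S p k s →
    TmConv S (.sub (Ft S k u) s) (Ft S (p + k) u)
  | .bvar i, k, p, s, hw, hg => by
      have hik : i < k := hw
      show TmConv S (.sub (Ft S k (.bvar i)) s) (Ft S (p + k) (.bvar i))
      unfold Ft
      rw [if_pos hik, if_pos (show i < p + k from by omega)]
      exact hg.bv i hik
  | .fvar y, k, p, s, hw, hg => by
      rw [Ft_fvar, Ft_fvar]
      exact hg.sh (.evar y (.tm 0))
  | .app f a, k, p, s, hw, hg => by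
      show TmConv S (.sub (.fa f k (fun i => Ft S (k + (S.far f).get i) (a i))) s) _
      obtain ⟨Θ, hΘ⟩ := hg.srt
      have hstep : Rw (S := S)
          (.sub (.fa f k (fun i => Ft S (k + (S.far f).get i) (a i))) s)
          (.fa f (p + k) (fun i => .sub (Ft S (k + (S.far f).get i) (a i))
            (liftSub S (p + k) ((S.far f).get i) s))) :=
        Rw.rfa ⟨Θ, hΘ⟩
      refine conv_trans (conv_rel hstep) ?_
      show TmConv S _ (.fa f (p + k) (fun i => Ft S (p + k + (S.far f).get i) (a i)))
      refine conv_fa (fun i => ?_)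
      have ih := key (a i) (hw i) (good_lift hg ((S.far f).get i))
      rwa [show p + (k + (S.far f).get i) = p + k + (S.far f).get i from by omega] at ih

/- ### Grafting computations -/

theorem graft_upChain {x : ℕ} {v : ETm S} : ∀ (k q : ℕ),
    ETm.graft x v (upChain S q k) = upChain S q k
  | 0, q => rfl
  | 1, q => rfl
  | (k + 2), q => by
      show ETm.graft x v (.comp (.up q) (upChain S (q + 1) (k + 1))) = _
      unfold ETm.graft
      rw [graft_upChain (k + 1) (q + 1)]
      rfl

theorem mainGen (t : Tm S) (x : ℕ) (ht : Tm.WF 0 t) :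
    ∀ (u : Tm S) (p : ℕ),
      TmConv S (Ft S p (Tm.subst x t u)) (ETm.graft x (Ft S 0 t) (Ft S p u))
  | .bvar i, p => by
      simp only [Tm.subst, Ft]
      split_ifs with h1 h2
      · simp only [ETm.graft]; exact conv_refl _
      · simp only [ETm.graft]; exact conv_refl _
      · simp only [ETm.graft, graft_upChain]; exact conv_refl _
  | .fvar y, p => by
      simp only [Tm.subst]
      by_cases hyx : y = x
      · rw [if_pos hyx]
        simp only [Ft]
        split_ifs with hp0
        · subst hp0
          simp only [ETm.graft, hyx, and_self, if_pos]
          exact conv_refl _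
        · simp only [ETm.graft, graft_upChain, hyx, and_self, if_pos]
          exact conv_symm (key t ht (good_up p))
      · rw [if_neg hyx]
        simp only [Ft]
        split_ifs with hp0
        · simp only [ETm.graft, hyx, false_and, if_neg, not_false_iff]
          exact conv_refl _
        · simp only [ETm.graft, graft_upChain, hyx, false_and, if_neg, not_false_iff]
          exact conv_refl _
  | .app f a, p => by
      simp only [Tm.subst, Ft, ETm.graft]
      exact conv_fa (fun i => mainGen t x ht (a i) (p + (S.far f).get i))

end Aux

/-- **Substitution collapses to grafting** (Proposition `substterm`): for all terms
`t`, `u` of `L` and every variable `x`,  `((t/x)u)' ≡ ⟨t'/x⟩u'` modulo the congruence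
generated by `σ`. -/
theorem precooking_subst_term (S : BSig) (t u : Tm S) (x : ℕ)
    (ht : Tm.WF 0 t) (hu : Tm.WF 0 u) :
    TmConv S (Ft S 0 (Tm.subst x t u)) (ETm.graft x (Ft S 0 t) (Ft S 0 u)) :=
  mainGen t x ht u 0
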